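/- For every ε > 0 there exists η with 0 < η ≤ 1 such that the following holds for every integer s ≥ 2 and every nonempty finite set V. Let ν : V^s → ℝ be nonnegative with ‖ν − 1‖_{cut(V^s)} ≤ η. Then: (i) for every G : V^s → ℝ with 0 ≤ G ≤ ν pointwise there exists W : V^s → [0,1] such that ‖G − W‖_{cut(V^s)} ≤ ε; and (ii) for every F : V^s → ℝ with |F| ≤ ν pointwise there exists H : V^s → [−1,1] such that ‖F − H‖_{cut(V^s)} ≤ ε. -/

import Mathlib

/-!
Let `D` be the closed convex hull of the functions `q_H(y) = 𝔼_z ∏_{ω ≠ 1^s} H_ω(π_ω(y, z))`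
with `|H_ω| ≤ 1`, so that `‖F‖_cut = sup_{q ∈ D} 𝔼 F q`. The set `D` lies in `[-1, 1]`, contains
`1`, is symmetric and is closed under products (a product of two `q_H` is an average of `q_H`'s).
Hence `‖ν - 1‖_cut ≤ η` makes `ν - 1` almost uncorrelated with `p ∘ q` for all `q ∈ D` and a fixed
polynomial `p` approximating `|t|` on `[-1, 1]`, so also with `|q|` and with `max q (lo • q)`.
Now let `lo • ν ≤ f ≤ ν`. If no `W` with values in `[lo, 1]` had `𝔼 (f - W) q ≤ ε` for all
`q ∈ D`, Hahn–Banach would give a single `q ∈ D` with `𝔼 (f - W) q > ε` for every such `W`; for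
`W = 1` on `{q ≥ 0}` and `W = lo` elsewhere this forces `𝔼 (ν - 1) max q (lo • q) > ε`.
Parts (i) and (ii) are the cases `lo = 0` and `lo = -1`.
-/

open Finset

/-- The average of a real-valued function on a finite type. -/
noncomputable def avg (α : Type*) [Fintype α] (f : α → ℝ) : ℝ :=
  (∑ x, f x) / (Fintype.card α : ℝ)

/-- The `ℓ`-box norm `‖F‖_{□_ℓ(V^s)}` of `F : V^s → ℝ`.  Here `V^{s×ℓ}` is modelled as
`Fin s → Fin ℓ → V`, an element `ω ∈ [ℓ]^s` as `ω : Fin s → Fin ℓ`, and the projection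
`π_ω : V^{s×ℓ} → V^s` sends `x` to `fun i => x i (ω i)`.  The box norm `‖F‖_{□(V^s)}`
is the case `ℓ = 2`. -/
noncomputable def boxNorm (V : Type*) [Fintype V] (s ℓ : ℕ) (F : (Fin s → V) → ℝ) : ℝ :=
  (avg (Fin s → Fin ℓ → V) fun x =>
      ∏ ω : Fin s → Fin ℓ, F fun i => x i (ω i)) ^ (((ℓ : ℝ) ^ s)⁻¹)

/-- The cut norm `‖F‖_{cut(V^s)}` of `F : V^s → ℝ`; the distinguished element `1^s` of
`[2]^s` is modelled as `fun _ => (0 : Fin 2)`. -/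
noncomputable def cutNorm (V : Type*) [Fintype V] (s : ℕ) (F : (Fin s → V) → ℝ) : ℝ :=
  sSup {r : ℝ | ∃ H : (Fin s → Fin 2) → (Fin s → V) → ℝ,
    (∀ ω y, H ω y ∈ Set.Icc (-1 : ℝ) 1) ∧
    r = avg (Fin s → Fin 2 → V) fun x =>
      F (fun i => x i 0) *
        ∏ ω ∈ Finset.univ.filter (fun ω : Fin s → Fin 2 => ω ≠ fun _ => 0),
          H ω fun i => x i (ω i)}

open Polynomial
open scoped BigOperators

section Separation

variable {Y : Type*} [Fintype Y]

lemma exists_dotProduct_eq (φ : StrongDual ℝ (Y → ℝ)) : ∃ w : Y → ℝ, ∀ h, φ h = w ⬝ᵥ h := by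
  classical
  exact ⟨(dotProductEquiv ℝ Y).symm φ, fun h =>
    (LinearMap.congr_fun ((dotProductEquiv ℝ Y).apply_symm_apply φ.toLinearMap) h).symm⟩

lemma mem_of_forall_dotProduct_le {D : Set (Y → ℝ)} (hDc : Convex ℝ D) (hDcl : IsClosed D)
    (hD0 : 0 ∈ D) {ε : ℝ} (hε : 0 < ε) {q : Y → ℝ}
    (hq : ∀ b : Y → ℝ, (∀ d ∈ D, b ⬝ᵥ d ≤ ε) → b ⬝ᵥ q ≤ ε) : q ∈ D := by
  by_contra hqD
  obtain ⟨φ, u, hφD, hφq⟩ := geometric_hahn_banach_closed_point hDc hDcl hqD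
  obtain ⟨w, hw⟩ := exists_dotProduct_eq φ
  have hu : 0 < u := by simpa using hφD 0 hD0
  have hb := hq ((ε / u) • w) fun d hd => by
    rw [smul_dotProduct, ← hw, smul_eq_mul, div_mul_eq_mul_div, div_le_iff₀ hu]
    exact mul_le_mul_of_nonneg_left (hφD d hd).le hε.le
  rw [smul_dotProduct, ← hw, smul_eq_mul, div_mul_eq_mul_div, div_le_iff₀ hu] at hb
  nlinarith

-- Separate `C` from the polar `{b | ∀ d ∈ D, b ⬝ᵥ d ≤ ε}` of `D`; rescaled, the separating
-- functional lies in `D` by the bipolar property above.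
lemma exists_mem_forall_lt_dotProduct {C D : Set (Y → ℝ)} (hCc : Convex ℝ C) (hCk : IsCompact C)
    (hDc : Convex ℝ D) (hDcl : IsClosed D) (hD0 : 0 ∈ D) {ε : ℝ} (hε : 0 < ε)
    (h : ∀ g ∈ C, ∃ q ∈ D, ε < g ⬝ᵥ q) : ∃ q ∈ D, ∀ g ∈ C, ε < g ⬝ᵥ q := by
  set B : Set (Y → ℝ) := ⋂ d ∈ D, {b | b ⬝ᵥ d ≤ ε}
  have hB : ∀ b, b ∈ B ↔ ∀ d ∈ D, b ⬝ᵥ d ≤ ε := by simp [B]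
  have hBc : Convex ℝ B := convex_iInter₂ fun d _ =>
    convex_halfSpace_le ⟨fun x y => add_dotProduct x y d, fun c x => smul_dotProduct c x d⟩ ε
  have hBcl : IsClosed B :=
    isClosed_biInter fun d _ => isClosed_le (continuous_id.dotProduct continuous_const)
      continuous_const
  have hCB : Disjoint C B := Set.disjoint_left.mpr fun g hg hgB => by
    obtain ⟨q, hq, hlt⟩ := h g hg
    exact hlt.not_ge ((hB g).mp hgB q hq)
  obtain ⟨φ, u, v, hφC, huv, hφB⟩ := geometric_hahn_banach_compact_closed hCc hCk hBc hBcl hCB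
  obtain ⟨w, hw⟩ := exists_dotProduct_eq φ
  have hv : v < 0 := by simpa using hφB 0 ((hB 0).mpr fun d _ => by simpa using hε.le)
  have hpair : ∀ g, g ⬝ᵥ ((ε / v) • w) = ε / v * φ g := fun g => by
    rw [dotProduct_smul, dotProduct_comm, ← hw, smul_eq_mul]
  have hεv : ε / v < 0 := div_neg_of_pos_of_neg hε hv
  refine ⟨(ε / v) • w, mem_of_forall_dotProduct_le hDc hDcl hD0 hε fun b hb => ?_, fun g hg => ?_⟩
  · rw [hpair]
    have := mul_lt_mul_of_neg_left (hφB b ((hB b).mpr hb)) hεv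
    rw [div_mul_cancel₀ ε hv.ne] at this
    exact this.le
  · rw [hpair]
    have := mul_lt_mul_of_neg_left ((hφC g hg).trans huv) hεv
    rwa [div_mul_cancel₀ ε hv.ne] at this

end Separation

section Correlation

variable {Y : Type*} [Fintype Y]

lemma isLinearMap_expect_mul (w : Y → ℝ) : IsLinearMap ℝ fun q : Y → ℝ => 𝔼 y, w y * q y where
  map_add q r := by simp only [Pi.add_apply, mul_add, expect_add_distrib]
  map_smul c q := by simp only [Pi.smul_apply, smul_eq_mul, mul_left_comm, ← mul_expect]

lemma expect_mul_le_of_mem_closedConvexHull {S : Set (Y → ℝ)} {w : Y → ℝ} {η : ℝ}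
    (h : ∀ q ∈ S, 𝔼 y, w y * q y ≤ η) {q : Y → ℝ} (hq : q ∈ closedConvexHull ℝ S) :
    𝔼 y, w y * q y ≤ η :=
  closedConvexHull_min h (convex_halfSpace_le (isLinearMap_expect_mul w) η)
    (isClosed_le (IsLinearMap.mk' _ (isLinearMap_expect_mul w)).continuous_of_finiteDimensional
      continuous_const) hq

lemma expect_mul_eq_dotProduct_div (g q : Y → ℝ) :
    𝔼 y, g y * q y = g ⬝ᵥ q / Fintype.card Y :=
  Fintype.expect_eq_sum_div_card _

lemma expect_mul_eval_le (w q : Y → ℝ) (p : ℝ[X]) {η : ℝ}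
    (h : ∀ k : ℕ, |𝔼 y, w y * q y ^ k| ≤ η) :
    𝔼 y, w y * p.eval (q y) ≤ (∑ k ∈ p.support, |p.coeff k|) * η := by
  simp_rw [eval_eq_sum, Polynomial.sum_def, mul_sum, expect_sum_comm, sum_mul]
  refine sum_le_sum fun k _ => ?_
  calc 𝔼 y, w y * (p.coeff k * q y ^ k) = p.coeff k * 𝔼 y, w y * q y ^ k := by
        rw [mul_expect]; simp only [mul_left_comm]
    _ ≤ |p.coeff k * 𝔼 y, w y * q y ^ k| := le_abs_self _
    _ ≤ |p.coeff k| * η := by rw [abs_mul]; exact mul_le_mul_of_nonneg_left (h k) (abs_nonneg _)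

variable [Nonempty Y]

lemma expect_mul_abs_le {ν q : Y → ℝ} {p : ℝ[X]} {η δ : ℝ} (hν : ∀ y, 0 ≤ ν y)
    (hq : q ∈ Set.Icc (-1) 1) (hcorr : ∀ k : ℕ, |𝔼 y, (ν y - 1) * q y ^ k| ≤ η)
    (hp : ∀ t ∈ Set.Icc (-1 : ℝ) 1, |p.eval t - abs t| ≤ δ) :
    𝔼 y, (ν y - 1) * |q y| ≤ (∑ k ∈ p.support, |p.coeff k|) * η + (η + 2) * δ := by
  have hδ : 0 ≤ δ := (abs_nonneg _).trans (hp 0 (by norm_num))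
  have hpoint : ∀ y, (ν y - 1) * |q y| ≤ (ν y - 1) * p.eval (q y) + ((ν y - 1) + 2) * δ := by
    intro y
    have hpy := hp (q y) ⟨hq.1 y, hq.2 y⟩
    have hν1 : |ν y - 1| ≤ (ν y - 1) + 2 := abs_le.mpr ⟨by linarith [hν y], by linarith⟩
    have herr : (ν y - 1) * (|q y| - p.eval (q y)) ≤ |ν y - 1| * δ := by
      calc (ν y - 1) * (|q y| - p.eval (q y)) ≤ |ν y - 1| * |p.eval (q y) - abs (q y)| := by
            rw [abs_sub_comm (p.eval (q y)), ← abs_mul]; exact le_abs_self _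
        _ ≤ |ν y - 1| * δ := mul_le_mul_of_nonneg_left hpy (abs_nonneg _)
    nlinarith
  have h0 : 𝔼 y, (ν y - 1) ≤ η := by simpa using (le_abs_self _).trans (hcorr 0)
  calc 𝔼 y, (ν y - 1) * |q y|
      ≤ 𝔼 y, ((ν y - 1) * p.eval (q y) + ((ν y - 1) + 2) * δ) :=
        expect_le_expect fun y _ => hpoint y
    _ = 𝔼 y, (ν y - 1) * p.eval (q y) + (𝔼 y, (ν y - 1) + 2) * δ := by
        rw [expect_add_distrib, ← expect_mul, expect_add_distrib, Fintype.expect_const]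
    _ ≤ (∑ k ∈ p.support, |p.coeff k|) * η + (η + 2) * δ := by
        gcongr
        exact expect_mul_eval_le _ _ p hcorr

lemma max_mul_eq {lo : ℝ} (hlo : lo ≤ 1) (t : ℝ) :
    max t (lo * t) = ((1 + lo) * t + (1 - lo) * |t|) / 2 := by
  rcases le_total 0 t with ht | ht
  · rw [max_eq_left (by nlinarith), abs_of_nonneg ht]; ring
  · rw [max_eq_right (by nlinarith), abs_of_nonpos ht]; ring

lemma expect_mul_max_le {ν q : Y → ℝ} {p : ℝ[X]} {η δ lo : ℝ} (hν : ∀ y, 0 ≤ ν y)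
    (hq : q ∈ Set.Icc (-1) 1) (hcorr : ∀ k : ℕ, |𝔼 y, (ν y - 1) * q y ^ k| ≤ η)
    (hp : ∀ t ∈ Set.Icc (-1 : ℝ) 1, |p.eval t - abs t| ≤ δ) (hlo : lo ∈ Set.Icc (-1) 1) :
    𝔼 y, (ν y - 1) * max (q y) (lo * q y)
      ≤ (1 + ∑ k ∈ p.support, |p.coeff k|) * η + (η + 2) * δ := by
  have hlin : 𝔼 y, (ν y - 1) * q y ≤ η := by simpa using (le_abs_self _).trans (hcorr 1)
  have habs := expect_mul_abs_le hν hq hcorr hp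
  have hη : 0 ≤ η := (abs_nonneg _).trans (hcorr 0)
  have hδ : 0 ≤ δ := (abs_nonneg _).trans (hp 0 (by norm_num))
  have hM : 0 ≤ ∑ k ∈ p.support, |p.coeff k| := sum_nonneg fun k _ => abs_nonneg _
  have hsplit : 𝔼 y, (ν y - 1) * max (q y) (lo * q y)
      = (1 + lo) / 2 * 𝔼 y, (ν y - 1) * q y + (1 - lo) / 2 * 𝔼 y, (ν y - 1) * |q y| := by
    simp_rw [max_mul_eq hlo.2, mul_expect, ← expect_add_distrib]
    exact expect_congr rfl fun y _ => by ring
  have hX : 0 ≤ (∑ k ∈ p.support, |p.coeff k|) * η + (η + 2) * δ := by positivity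
  rw [hsplit]
  nlinarith [mul_le_mul_of_nonneg_left hlin (by linarith [hlo.1] : 0 ≤ (1 + lo) / 2),
    mul_le_mul_of_nonneg_left habs (by linarith [hlo.2] : 0 ≤ (1 - lo) / 2), hlo.1, hlo.2]

lemma sub_ite_mul_le_mul_max {lo a b t : ℝ} (hlo : lo ≤ 1) (hab : lo * b ≤ a ∧ a ≤ b) :
    (a - if 0 ≤ t then 1 else lo) * t ≤ (b - 1) * max t (lo * t) := by
  split_ifs with ht
  · rw [max_eq_left (by nlinarith)]; nlinarith
  · rw [max_eq_right (by nlinarith)]; nlinarith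

lemma exists_forall_expect_mul_le {D : Set (Y → ℝ)} (hDc : Convex ℝ D) (hDcl : IsClosed D)
    (hD0 : 0 ∈ D) {ν f : Y → ℝ} {lo ε : ℝ} (hε : 0 < ε) (hlo : lo ≤ 1)
    (hf : ∀ y, lo * ν y ≤ f y ∧ f y ≤ ν y)
    (hcorr : ∀ q ∈ D, 𝔼 y, (ν y - 1) * max (q y) (lo * q y) < ε) :
    ∃ W : Y → ℝ, (∀ y, W y ∈ Set.Icc lo 1) ∧ ∀ q ∈ D, 𝔼 y, (f y - W y) * q y ≤ ε := by
  by_contra! h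
  have hN : (0 : ℝ) < Fintype.card Y := by exact_mod_cast Fintype.card_pos
  obtain ⟨q, hqD, hq⟩ := exists_mem_forall_lt_dotProduct (C := Set.Icc (f - 1) (f - fun _ => lo))
    (convex_Icc _ _) isCompact_Icc hDc hDcl hD0 (mul_pos hε hN) fun g hg => by
      obtain ⟨q, hq, hlt⟩ := h (f - g) fun y => by
        have hg1 := hg.1 y
        have hg2 := hg.2 y
        simp only [Pi.sub_apply, Pi.one_apply, Set.mem_Icc] at hg1 hg2 ⊢
        constructor <;> linarith
      refine ⟨q, hq, ?_⟩
      rw [expect_mul_eq_dotProduct_div, lt_div_iff₀ hN] at hlt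
      simpa using hlt
  set W : Y → ℝ := fun y => if 0 ≤ q y then 1 else lo
  have hW : f - W ∈ Set.Icc (f - 1) (f - fun _ => lo) := by
    refine ⟨fun y => ?_, fun y => ?_⟩ <;> simp only [W, Pi.sub_apply, Pi.one_apply] <;>
      split_ifs <;> linarith
  have hgap := hq (f - W) hW
  rw [← lt_div_iff₀ hN, ← expect_mul_eq_dotProduct_div] at hgap
  refine (hcorr q hqD).not_ge (hgap.le.trans (expect_le_expect fun y _ => ?_))
  exact sub_ite_mul_le_mul_max hlo (hf y)

end Correlation

section ClosedConvexHull

lemma ContinuousLinearMap.mapsTo_closedConvexHull {E F : Type*} [AddCommGroup E] [Module ℝ E]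
    [TopologicalSpace E] [AddCommGroup F] [Module ℝ F] [TopologicalSpace F] (L : E →L[ℝ] F)
    {s : Set E} {t : Set F} (h : Set.MapsTo L s (closedConvexHull ℝ t)) :
    Set.MapsTo L (closedConvexHull ℝ s) (closedConvexHull ℝ t) :=
  closedConvexHull_min h (convex_closedConvexHull.linear_preimage L.toLinearMap)
    (isClosed_closedConvexHull.preimage L.continuous)

variable {A : Type*} [NormedRing A] [NormedAlgebra ℝ A] {s : Set A}

lemma neg_mem_closedConvexHull (h : ∀ a ∈ s, -a ∈ s) {a : A} (ha : a ∈ closedConvexHull ℝ s) :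
    -a ∈ closedConvexHull ℝ s :=
  (-ContinuousLinearMap.id ℝ A).mapsTo_closedConvexHull
    (fun b hb => subset_closedConvexHull (h b hb)) ha

lemma mul_mem_closedConvexHull (h : ∀ a ∈ s, ∀ b ∈ s, a * b ∈ convexHull ℝ s) {a b : A}
    (ha : a ∈ closedConvexHull ℝ s) (hb : b ∈ closedConvexHull ℝ s) :
    a * b ∈ closedConvexHull ℝ s := by
  have hleft : ∀ a ∈ s, ∀ b ∈ closedConvexHull ℝ s, a * b ∈ closedConvexHull ℝ s :=
    fun a ha => (ContinuousLinearMap.mul ℝ A a).mapsTo_closedConvexHull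
      fun b hb => convexHull_subset_closedConvexHull (h a ha b hb)
  exact ((ContinuousLinearMap.mul ℝ A).flip b).mapsTo_closedConvexHull
    (fun a' ha' => hleft a' ha' b hb) ha

lemma pow_mem_closedConvexHull (h1 : 1 ∈ s) (h : ∀ a ∈ s, ∀ b ∈ s, a * b ∈ convexHull ℝ s)
    {a : A} (ha : a ∈ closedConvexHull ℝ s) (k : ℕ) : a ^ k ∈ closedConvexHull ℝ s := by
  induction k with
  | zero => simpa using subset_closedConvexHull h1
  | succ k ih => simpa [pow_succ] using mul_mem_closedConvexHull h ih ha

end ClosedConvexHull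

lemma avg_eq_expect {α : Type*} [Fintype α] (f : α → ℝ) : avg α f = 𝔼 x, f x :=
  (Fintype.expect_eq_sum_div_card f).symm

lemma expect_apply_mem_convexHull {ι Y : Type*} [Fintype ι] [Nonempty ι] {S : Set (Y → ℝ)}
    {f : ι → Y → ℝ} (hf : ∀ i, f i ∈ S) : (fun y => 𝔼 i, f i y) ∈ convexHull ℝ S := by
  convert univ.centerMass_mem_convexHull (w := fun _ => (1 : ℝ)) (fun i _ => zero_le_one)
    (by simpa using Fintype.card_pos) (fun i _ => hf i) using 1
  funext y
  simp [centerMass, Fintype.expect_eq_sum_div_card, Finset.sum_apply, div_eq_inv_mul]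

section CutNorm

variable {V : Type*} {s : ℕ}

def mix (ω : Fin s → Fin 2) (y z : Fin s → V) : Fin s → V :=
  fun i => if ω i = 0 then y i else z i

lemma mix_mix (ω : Fin s → Fin 2) (y z z' : Fin s → V) : mix ω (mix ω y z) z' = mix ω y z' :=
  funext fun i => by unfold mix; split_ifs <;> rfl

variable [Fintype V]

-- `mix ω y z` is `π_ω` of the point of `V^{s×2}` with columns `y` and `z`.
noncomputable def cutDual (H : (Fin s → Fin 2) → (Fin s → V) → ℝ) : (Fin s → V) → ℝ :=
  fun y => 𝔼 z, ∏ ω ∈ univ.filter (fun ω : Fin s → Fin 2 => ω ≠ fun _ => 0), H ω (mix ω y z)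

lemma avg_mul_prod_eq_expect_mul_cutDual (F : (Fin s → V) → ℝ)
    (H : (Fin s → Fin 2) → (Fin s → V) → ℝ) :
    (avg (Fin s → Fin 2 → V) fun x => F (fun i => x i 0) *
      ∏ ω ∈ univ.filter (fun ω : Fin s → Fin 2 => ω ≠ fun _ => 0), H ω fun i => x i (ω i))
      = 𝔼 y, F y * cutDual H y := by
  let e : (Fin s → V) × (Fin s → V) ≃ (Fin s → Fin 2 → V) :=
    (Equiv.arrowProdEquivProdArrow _ _ _).symm.trans
      (Equiv.piCongrRight fun _ => (piFinTwoEquiv fun _ => V).symm)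
  have he : ∀ y z ω, (fun i => e (y, z) i (ω i)) = mix ω y z := fun y z ω => funext fun i => by
    simp only [mix, e]
    generalize ω i = j
    fin_cases j <;> rfl
  rw [avg_eq_expect, (Fintype.expect_equiv e _ _ fun _ => rfl).symm, ← univ_product_univ,
    expect_product]
  refine expect_congr rfl fun y _ => ?_
  simp only [cutDual, mul_expect, he]
  rfl

variable (V s) in
def cutDualSet : Set ((Fin s → V) → ℝ) :=
  cutDual '' {H | ∀ ω y, H ω y ∈ Set.Icc (-1 : ℝ) 1}

lemma abs_prod_le_one {ι X : Type*} (t : Finset ι) {H : ι → X → ℝ}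
    (hH : ∀ i x, H i x ∈ Set.Icc (-1 : ℝ) 1) (g : ι → X) : |∏ i ∈ t, H i (g i)| ≤ 1 := by
  rw [abs_prod]
  exact prod_le_one (fun i _ => abs_nonneg _) fun i _ => abs_le.mpr (hH i (g i))

lemma cutNorm_eq_sSup (F : (Fin s → V) → ℝ) :
    cutNorm V s F = sSup ((fun q => 𝔼 y, F y * q y) '' cutDualSet V s) := by
  simp only [cutNorm, cutDualSet, Set.image_image, avg_mul_prod_eq_expect_mul_cutDual]
  congr 1
  ext r
  simp [eq_comm]

lemma cutNorm_le {F : (Fin s → V) → ℝ} {r : ℝ} (hr : 0 ≤ r)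
    (h : ∀ q ∈ cutDualSet V s, 𝔼 y, F y * q y ≤ r) : cutNorm V s F ≤ r := by
  rw [cutNorm_eq_sSup]
  exact Real.sSup_le (Set.forall_mem_image.mpr h) hr

lemma neg_mem_cutDualSet (hs : 0 < s) {q : (Fin s → V) → ℝ} (hq : q ∈ cutDualSet V s) :
    -q ∈ cutDualSet V s := by
  classical
  obtain ⟨H, hH, rfl⟩ := hq
  set top : Fin s → Fin 2 := fun _ => 1
  have htop : top ∈ univ.filter fun ω : Fin s → Fin 2 => ω ≠ fun _ => 0 :=
    mem_filter.mpr ⟨mem_univ _, fun h => by simpa [top] using congrFun h ⟨0, hs⟩⟩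
  refine ⟨fun ω w => (if ω = top then -1 else 1) * H ω w, fun ω w => ?_, funext fun y => ?_⟩
  · have := hH ω w
    simp only [Set.mem_Icc] at this ⊢
    split_ifs <;> constructor <;> linarith [this.1, this.2]
  · simp only [cutDual, prod_mul_distrib, prod_ite_eq', htop, if_true, Pi.neg_apply,
      ← expect_neg_distrib]
    exact expect_congr rfl fun z _ => by ring

variable [Nonempty V]

lemma cutDualSet_subset_Icc : cutDualSet V s ⊆ Set.Icc (-1) 1 := by
  rintro _ ⟨H, hH, rfl⟩
  have hprod := fun y z => abs_le.mp (abs_prod_le_one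
    (univ.filter fun ω : Fin s → Fin 2 => ω ≠ fun _ => 0) hH fun ω => mix ω y z)
  exact ⟨fun y => le_expect univ_nonempty fun z _ => (hprod y z).1,
    fun y => expect_le univ_nonempty fun z _ => (hprod y z).2⟩

lemma le_cutNorm (F : (Fin s → V) → ℝ) {q : (Fin s → V) → ℝ} (hq : q ∈ cutDualSet V s) :
    𝔼 y, F y * q y ≤ cutNorm V s F := by
  rw [cutNorm_eq_sSup]
  refine le_csSup ⟨𝔼 y, |F y|, ?_⟩ (Set.mem_image_of_mem _ hq)
  rintro _ ⟨q', hq', rfl⟩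
  refine expect_le_expect fun y _ => ?_
  have hq'y : |q' y| ≤ 1 :=
    abs_le.mpr ⟨(cutDualSet_subset_Icc hq').1 y, (cutDualSet_subset_Icc hq').2 y⟩
  calc F y * q' y ≤ |F y| * |q' y| := by rw [← abs_mul]; exact le_abs_self _
    _ ≤ |F y| := mul_le_of_le_one_right (abs_nonneg _) hq'y

lemma one_mem_cutDualSet : 1 ∈ cutDualSet V s :=
  ⟨fun _ _ => 1, fun _ _ => by norm_num, funext fun y => by simp [cutDual]⟩

lemma mul_mem_convexHull_cutDualSet {q r : (Fin s → V) → ℝ} (hq : q ∈ cutDualSet V s)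
    (hr : r ∈ cutDualSet V s) : q * r ∈ convexHull ℝ (cutDualSet V s) := by
  obtain ⟨H, hH, rfl⟩ := hq
  obtain ⟨H', hH', rfl⟩ := hr
  set K : (Fin s → V) → (Fin s → Fin 2) → (Fin s → V) → ℝ :=
    fun z' ω w => H ω w * H' ω (mix ω w z')
  have hK : ∀ z', cutDual (K z') ∈ cutDualSet V s := fun z' => ⟨K z', fun ω w => by
    refine abs_le.mp ?_
    rw [abs_mul]
    exact mul_le_one₀ (abs_le.mpr (hH ω w)) (abs_nonneg _) (abs_le.mpr (hH' _ _)), rfl⟩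
  convert expect_apply_mem_convexHull hK using 1
  funext y
  simp only [Pi.mul_apply, cutDual, K, prod_mul_distrib, mix_mix, expect_mul_expect]
  exact expect_comm _ _ _

theorem exists_cutNorm_sub_le (hs : 0 < s) {ν f : (Fin s → V) → ℝ} {p : ℝ[X]}
    {η δ lo ε : ℝ} (hν : ∀ x, 0 ≤ ν x) (hcut : cutNorm V s (fun x => ν x - 1) ≤ η)
    (hp : ∀ t ∈ Set.Icc (-1 : ℝ) 1, |p.eval t - abs t| ≤ δ)
    (hε : (1 + ∑ k ∈ p.support, |p.coeff k|) * η + (η + 2) * δ < ε) (hlo : lo ∈ Set.Icc (-1) 1)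
    (hf : ∀ x, lo * ν x ≤ f x ∧ f x ≤ ν x) :
    ∃ W : (Fin s → V) → ℝ, (∀ x, W x ∈ Set.Icc lo 1) ∧ cutNorm V s (fun x => f x - W x) ≤ ε := by
  set D := closedConvexHull ℝ (cutDualSet V s)
  have hcorr : ∀ q ∈ D, 𝔼 y, (ν y - 1) * q y ≤ η := fun _ =>
    expect_mul_le_of_mem_closedConvexHull fun q hq => (le_cutNorm _ hq).trans hcut
  have hneg : ∀ q ∈ D, -q ∈ D := fun _ => neg_mem_closedConvexHull fun _ => neg_mem_cutDualSet hs
  have habs : ∀ q ∈ D, |𝔼 y, (ν y - 1) * q y| ≤ η := fun q hq => by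
    have hlow := hcorr _ (hneg q hq)
    simp only [Pi.neg_apply, mul_neg, expect_neg_distrib] at hlow
    exact abs_le.mpr ⟨by linarith, hcorr q hq⟩
  have hpow : ∀ q ∈ D, ∀ k : ℕ, q ^ k ∈ D := fun _ hq k =>
    pow_mem_closedConvexHull (A := (Fin s → V) → ℝ) one_mem_cutDualSet
      (fun _ ha _ hb => mul_mem_convexHull_cutDualSet ha hb) hq k
  have hbdd : D ⊆ Set.Icc (-1) 1 :=
    closedConvexHull_min cutDualSet_subset_Icc (convex_Icc _ _) isClosed_Icc
  have hmax : ∀ q ∈ D, 𝔼 y, (ν y - 1) * max (q y) (lo * q y) < ε := fun q hq =>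
    (expect_mul_max_le hν (hbdd hq) (fun k => habs _ (hpow q hq k)) hp hlo).trans_lt hε
  have hD0 : (0 : (Fin s → V) → ℝ) ∈ D := by
    have h1 : (1 : (Fin s → V) → ℝ) ∈ D := subset_closedConvexHull one_mem_cutDualSet
    simpa using convex_closedConvexHull h1 (hneg 1 h1) (by norm_num : (0 : ℝ) ≤ 1 / 2)
      (by norm_num : (0 : ℝ) ≤ 1 / 2) (by norm_num)
  have hε0 : 0 < ε := by simpa using hmax 0 hD0
  obtain ⟨W, hW, hWD⟩ := exists_forall_expect_mul_le convex_closedConvexHull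
    isClosed_closedConvexHull hD0 hε0 hlo.2 hf hmax
  exact ⟨W, hW, cutNorm_le hε0.le fun q hq => hWD q (subset_closedConvexHull hq)⟩

end CutNorm

theorem stmt10 (ε : ℝ) (hε : 0 < ε) :
    ∃ η : ℝ, 0 < η ∧ η ≤ 1 ∧
      ∀ (s : ℕ), 2 ≤ s →
        ∀ (V : Type) [Fintype V] [Nonempty V] (ν : (Fin s → V) → ℝ),
          (∀ x, 0 ≤ ν x) →
          cutNorm V s (fun x => ν x - 1) ≤ η →
          (∀ G : (Fin s → V) → ℝ, (∀ x, 0 ≤ G x ∧ G x ≤ ν x) →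
            ∃ W : (Fin s → V) → ℝ, (∀ x, W x ∈ Set.Icc (0 : ℝ) 1) ∧
              cutNorm V s (fun x => G x - W x) ≤ ε) ∧
          (∀ F : (Fin s → V) → ℝ, (∀ x, |F x| ≤ ν x) →
            ∃ H : (Fin s → V) → ℝ, (∀ x, H x ∈ Set.Icc (-1 : ℝ) 1) ∧
              cutNorm V s (fun x => F x - H x) ≤ ε) := by
  obtain ⟨p, hp⟩ := exists_polynomial_near_of_continuousOn (-1) 1 (fun t => |t|)
    continuous_abs.continuousOn (ε / 8) (by positivity)
  set M := ∑ k ∈ p.support, |p.coeff k|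
  have hM : 0 ≤ M := sum_nonneg fun k _ => abs_nonneg _
  set η := min 1 (ε / (4 * (1 + M)))
  have hη : 0 < η := lt_min one_pos (by positivity)
  have hsmall : (1 + M) * η + (η + 2) * (ε / 8) < ε := by
    have h1 : (1 + M) * η ≤ ε / 4 := by
      rw [← le_div_iff₀' (by positivity), div_div]
      exact min_le_right _ _
    nlinarith [min_le_left 1 (ε / (4 * (1 + M)))]
  refine ⟨η, hη, min_le_left _ _, fun s hs V _ _ ν hν hcut => ⟨fun G hG => ?_, fun F hF => ?_⟩⟩
  · exact exists_cutNorm_sub_le (by omega) hν hcut (fun t ht => (hp t ht).le) hsmall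
      (by norm_num) fun x => ⟨by simpa using (hG x).1, (hG x).2⟩
  · exact exists_cutNorm_sub_le (by omega) hν hcut (fun t ht => (hp t ht).le) hsmall
      (by norm_num) fun x => ⟨by linarith [neg_abs_le (F x), hF x], (le_abs_self _).trans (hF x)⟩
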